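/- arXiv:2512.02427 — 3 statements merged into one kernel-verified Lean document; each statement's English description precedes it below -/
import Mathlib

section
/- Let g : [0,1] → ℝ be nondecreasing and nonnegative, and let δ ∈ [0,1]. Then for every x ∈ [0,δ], the sum of the integral of g over [x, min(1, x+δ)] and the integral of g over [0, max(0, δ-1+x)] is at least the integral of g over [0,δ]. -/
open MeasureTheory intervalIntegral

lemma key_compare (g : ℝ → ℝ) (c p q r s : ℝ) (hpq : p ≤ q) (hrs : r ≤ s)
    (hlen : q - p ≤ s - r) (hc : 0 ≤ c)
    (hup : ∀ t ∈ Set.Icc p q, g t ≤ c) (hlo : ∀ t ∈ Set.Icc r s, c ≤ g t)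
    (h1 : IntervalIntegrable g volume p q) (h2 : IntervalIntegrable g volume r s) :
    ∫ t in p..q, g t ≤ ∫ t in r..s, g t := by
  have A : ∫ t in p..q, g t ≤ (q - p) * c := by
    have := intervalIntegral.integral_mono_on hpq h1 (_root_.intervalIntegrable_const (c := c)) hup
    simpa [intervalIntegral.integral_const, smul_eq_mul] using this
  have B : (s - r) * c ≤ ∫ t in r..s, g t := by
    have := intervalIntegral.integral_mono_on hrs (_root_.intervalIntegrable_const (c := c)) h2 hlo
    simpa [intervalIntegral.integral_const, smul_eq_mul] using this
  have C : (q - p) * c ≤ (s - r) * c := mul_le_mul_of_nonneg_right hlen hc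
  linarith

theorem covering_inequality (g : ℝ → ℝ) (δ x : ℝ)
    (hg_mono : MonotoneOn g (Set.Icc 0 1))
    (hg_nonneg : ∀ t ∈ Set.Icc (0:ℝ) 1, 0 ≤ g t)
    (hg_int : IntervalIntegrable g volume 0 1)
    (hδ : δ ∈ Set.Icc (0:ℝ) 1) (hx : x ∈ Set.Icc (0:ℝ) δ) :
    ∫ η in (0:ℝ)..δ, g η ≤
      (∫ η in x..(min 1 (x + δ)), g η) + ∫ η in (0:ℝ)..(max 0 (δ - 1 + x)), g η := by
  obtain ⟨hδ0, hδ1⟩ := hδ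
  obtain ⟨hx0, hxδ⟩ := hx
  have hx1 : x ≤ 1 := hxδ.trans hδ1
  -- integrability on any subinterval of [0,1]
  have hsub : ∀ p q : ℝ, 0 ≤ p → q ≤ 1 → p ≤ q → IntervalIntegrable g volume p q := by
    intro p q hp hq h
    refine hg_int.mono_set ?_
    rw [Set.uIcc_of_le h, Set.uIcc_of_le (zero_le_one)]
    exact Set.Icc_subset_Icc hp hq
  have hgδ0 : 0 ≤ g δ := hg_nonneg δ ⟨hδ0, hδ1⟩
  rcases le_total (x + δ) 1 with h | h
  · -- min = x + δ, max = 0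
    have hmin : min 1 (x + δ) = x + δ := min_eq_right h
    have hmax : max 0 (δ - 1 + x) = 0 := max_eq_left (by linarith)
    rw [hmin, hmax, intervalIntegral.integral_same, add_zero]
    -- ∫0..δ = ∫0..x + ∫x..δ ; ∫x..x+δ = ∫x..δ + ∫δ..x+δ
    have e1 : (∫ η in (0:ℝ)..x, g η) + ∫ η in x..δ, g η = ∫ η in (0:ℝ)..δ, g η :=
      intervalIntegral.integral_add_adjacent_intervals (hsub 0 x le_rfl hx1 hx0) (hsub x δ hx0 hδ1 hxδ)
    have e2 : (∫ η in x..δ, g η) + ∫ η in δ..(x + δ), g η = ∫ η in x..(x + δ), g η :=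
      intervalIntegral.integral_add_adjacent_intervals (hsub x δ hx0 hδ1 hxδ)
        (hsub δ (x + δ) hδ0 h (by linarith))
    have key : ∫ η in (0:ℝ)..x, g η ≤ ∫ η in δ..(x + δ), g η := by
      refine key_compare g (g δ) 0 x δ (x + δ) hx0 (by linarith) (by linarith) hgδ0
        ?_ ?_ (hsub 0 x le_rfl hx1 hx0) (hsub δ (x + δ) hδ0 h (by linarith))
      · intro t ht
        exact hg_mono ⟨ht.1, (ht.2.trans hx1)⟩ ⟨hδ0, hδ1⟩ (ht.2.trans hxδ)
      · intro t ht
        exact hg_mono ⟨hδ0, hδ1⟩ ⟨hδ0.trans ht.1, ht.2.trans h⟩ ht.1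
    linarith
  · -- min = 1, max = δ - 1 + x
    have hmin : min 1 (x + δ) = 1 := min_eq_left h
    have ha0 : (0:ℝ) ≤ δ - 1 + x := by linarith
    have hmax : max 0 (δ - 1 + x) = δ - 1 + x := max_eq_right ha0
    rw [hmin, hmax]
    set a := δ - 1 + x with ha
    have hax : a ≤ x := by simp only [ha]; linarith
    have haδ : a ≤ δ := by simp only [ha]; linarith
    have e1 : (∫ η in (0:ℝ)..a, g η) + ∫ η in a..δ, g η = ∫ η in (0:ℝ)..δ, g η :=
      intervalIntegral.integral_add_adjacent_intervals (hsub 0 a le_rfl (by linarith) ha0)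
        (hsub a δ ha0 hδ1 haδ)
    have e2 : (∫ η in a..x, g η) + ∫ η in x..δ, g η = ∫ η in a..δ, g η :=
      intervalIntegral.integral_add_adjacent_intervals (hsub a x ha0 hx1 hax)
        (hsub x δ hx0 hδ1 hxδ)
    have e3 : (∫ η in x..δ, g η) + ∫ η in δ..1, g η = ∫ η in x..1, g η :=
      intervalIntegral.integral_add_adjacent_intervals (hsub x δ hx0 hδ1 hxδ)
        (hsub δ 1 hδ0 le_rfl hδ1)
    have key : ∫ η in a..x, g η ≤ ∫ η in δ..1, g η := by
      refine key_compare g (g δ) a x δ 1 hax hδ1 (by simp only [ha]; linarith) hgδ0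
        ?_ ?_ (hsub a x ha0 hx1 hax) (hsub δ 1 hδ0 le_rfl hδ1)
      · intro t ht
        exact hg_mono ⟨ha0.trans ht.1, ht.2.trans hx1⟩ ⟨hδ0, hδ1⟩ (ht.2.trans hxδ)
      · intro t ht
        exact hg_mono ⟨hδ0, hδ1⟩ ⟨hδ0.trans ht.1, ht.2⟩ ht.1
    linarith
end

section
/- Let X be an integrable real random variable with continuous strictly increasing CDF F, and let δ ∈ (0,1). Then sup_{τ ∈ ℝ} (τ - (1/δ)·E[max(τ - X, 0)]) = (1/δ) · ∫₀^δ F⁻¹(η) dη. -/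
/-!
For every threshold `c`, the pointwise bound `(τ - x)⁺ ≥ (τ - x) 𝟙{x ≤ c}` gives
`τ - E[(τ - X)⁺] / δ ≤ E[X 𝟙{X ≤ c}] / δ` as soon as `P(X ≤ c) = δ`, with equality at `τ = c`;
taking `c = F⁻¹(δ)` identifies the supremum. Since `F⁻¹` pushes the uniform law on `(0, 1)`
forward to the law of `X`, the tail expectation `E[X 𝟙{X ≤ F⁻¹(δ)}]` is `∫₀^δ F⁻¹`.
-/

open MeasureTheory intervalIntegral Set

lemma StrictMono.lt_of_forall_le {α β : Type*} [Preorder α] [NoMaxOrder α] [Preorder β]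
    {f : α → β} (hf : StrictMono f) {b : β} (hb : ∀ a, f a ≤ b) (a : α) : f a < b :=
  let ⟨a', ha'⟩ := exists_gt a
  (hf ha').trans_le (hb a')

lemma StrictMono.monotoneOn_of_rightInvOn {α β : Type*} [LinearOrder α] [Preorder β]
    {f : α → β} {g : β → α} {s : Set β} (hf : StrictMono f) (hg : RightInvOn g f s) :
    MonotoneOn g s :=
  fun p hp q hq hpq => hf.le_iff_le.1 (by rwa [hg hp, hg hq])

section RockafellarUryasev

variable {ν : Measure ℝ}

lemma setIntegral_Iic_sub_eq_integral_max (τ : ℝ) :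
    ∫ x in Iic τ, (τ - x) ∂ν = ∫ x, max (τ - x) 0 ∂ν := by
  rw [← MeasureTheory.integral_indicator measurableSet_Iic]
  congr 1 with x
  by_cases hx : x ≤ τ
  · simp [hx]
  · simp [hx, (not_le.1 hx).le]

variable [IsFiniteMeasure ν]

lemma setIntegral_Iic_sub (hν : Integrable id ν) (τ c : ℝ) :
    ∫ x in Iic c, (τ - x) ∂ν = τ * ν.real (Iic c) - ∫ x in Iic c, x ∂ν := by
  rw [integral_sub (g := fun x => x) (integrable_const τ) hν.integrableOn, setIntegral_const,
    smul_eq_mul, mul_comm]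

lemma setIntegral_Iic_sub_le_integral_max (hν : Integrable id ν) (τ c : ℝ) :
    ∫ x in Iic c, (τ - x) ∂ν ≤ ∫ x, max (τ - x) 0 ∂ν := by
  have hmax : Integrable (fun x => max (τ - x) 0) ν := ((integrable_const τ).sub hν).pos_part
  calc ∫ x in Iic c, (τ - x) ∂ν
      ≤ ∫ x in Iic c, max (τ - x) 0 ∂ν :=
        setIntegral_mono ((integrable_const τ).sub hν).integrableOn hmax.integrableOn
          fun x => le_max_left _ _
    _ ≤ ∫ x, max (τ - x) 0 ∂ν :=
        setIntegral_le_integral hmax (.of_forall fun x => le_max_right _ _)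

theorem iSup_sub_integral_max_eq (hν : Integrable id ν) {c δ : ℝ} (hδ : 0 < δ)
    (hc : ν.real (Iic c) = δ) :
    ⨆ τ : ℝ, (τ - (1 / δ) * ∫ x, max (τ - x) 0 ∂ν) = (1 / δ) * ∫ x in Iic c, x ∂ν := by
  have hcancel : ∀ τ : ℝ, τ - (1 / δ) * (τ * δ - ∫ x in Iic c, x ∂ν) =
      (1 / δ) * ∫ x in Iic c, x ∂ν := fun τ => by field_simp; ring
  refine IsGreatest.csSup_eq ⟨⟨c, ?_⟩, forall_mem_range.2 fun τ => ?_⟩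
  · dsimp only
    rw [← setIntegral_Iic_sub_eq_integral_max, setIntegral_Iic_sub hν, hc, hcancel]
  · rw [← hcancel τ, ← hc, ← setIntegral_Iic_sub hν]
    gcongr
    exact setIntegral_Iic_sub_le_integral_max hν τ c

end RockafellarUryasev

section Quantile

variable {F Finv : ℝ → ℝ} (hF : StrictMono F) (hFinv : RightInvOn Finv F (Ioo 0 1))
include hF hFinv

lemma Ioo_inter_preimage_Iic_eq_Ioc {t : ℝ} (ht : F t < 1) :
    Ioo 0 1 ∩ Finv ⁻¹' Iic t = Ioc 0 (F t) := by
  ext u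
  simp only [mem_inter_iff, mem_Ioo, mem_preimage, mem_Iic, mem_Ioc]
  constructor
  · rintro ⟨hu, hut⟩
    exact ⟨hu.1, hFinv hu ▸ hF.monotone hut⟩
  · rintro ⟨hu0, hut⟩
    have hu : u ∈ Ioo (0 : ℝ) 1 := ⟨hu0, hut.trans_lt ht⟩
    exact ⟨hu, hF.le_iff_le.1 (by rwa [hFinv hu])⟩

variable {ν : Measure ℝ} [IsFiniteMeasure ν] (hν : ∀ t, ν (Iic t) = ENNReal.ofReal (F t))
  (hF1 : ∀ t, F t < 1)
include hν hF1

lemma map_quantile_eq : (volume.restrict (Ioo 0 1)).map Finv = ν := by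
  refine (Measure.ext_of_Iic ν _ fun t => ?_).symm
  rw [hν, Measure.map_apply_of_aemeasurable
      (aemeasurable_restrict_of_monotoneOn measurableSet_Ioo
        (hF.monotoneOn_of_rightInvOn hFinv)) measurableSet_Iic,
    Measure.restrict_apply' measurableSet_Ioo, inter_comm,
    Ioo_inter_preimage_Iic_eq_Ioc hF hFinv (hF1 t), Real.volume_Ioc, sub_zero]

lemma setIntegral_Iic_eq_setIntegral_quantile {g : ℝ → ℝ} (hg : AEStronglyMeasurable g ν)
    (t : ℝ) : ∫ x in Iic t, g x ∂ν = ∫ u in Ioc 0 (F t), g (Finv u) := by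
  rw [← map_quantile_eq hF hFinv hν hF1] at hg ⊢
  rw [setIntegral_map measurableSet_Iic hg
      (aemeasurable_restrict_of_monotoneOn measurableSet_Ioo
        (hF.monotoneOn_of_rightInvOn hFinv)),
    Measure.restrict_restrict' measurableSet_Ioo, inter_comm,
    Ioo_inter_preimage_Iic_eq_Ioc hF hFinv (hF1 t)]

end Quantile

theorem cvar_eq_tail_average_of_quantiles_general {Ω : Type*} [MeasurableSpace Ω]
    (μ : Measure Ω) [IsProbabilityMeasure μ]
    (X : Ω → ℝ) (hX : Integrable X μ)
    (F : ℝ → ℝ) (hF : ∀ t : ℝ, F t = (μ {ω | X ω ≤ t}).toReal)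
    (hFmono : StrictMono F)
    (Finv : ℝ → ℝ) (hFinv : ∀ p ∈ Set.Ioo (0:ℝ) 1, F (Finv p) = p)
    (δ : ℝ) (hδ : δ ∈ Set.Ioo (0:ℝ) 1) :
    (⨆ τ : ℝ, (τ - (1 / δ) * ∫ ω, max (τ - X ω) 0 ∂μ)) =
      (1 / δ) * ∫ η in (0:ℝ)..δ, Finv η := by
  have hXm : AEMeasurable X μ := hX.aemeasurable
  set ν : Measure ℝ := μ.map X
  have hνF : ∀ t, ν (Iic t) = ENNReal.ofReal (F t) := fun t => by
    rw [Measure.map_apply_of_aemeasurable hXm measurableSet_Iic, hF t,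
      ENNReal.ofReal_toReal (measure_ne_top μ _)]
    rfl
  have hF1 : ∀ t, F t < 1 := hFmono.lt_of_forall_le fun t => (hF t).trans_le measureReal_le_one
  have hid : Integrable id ν := (integrable_map_measure aestronglyMeasurable_id hXm).2 hX
  have hlaw : ∀ τ, ∫ ω, max (τ - X ω) 0 ∂μ = ∫ x, max (τ - x) 0 ∂ν := fun τ =>
    (integral_map (f := fun x => max (τ - x) 0) hXm (by fun_prop)).symm
  have hδF : F (Finv δ) = δ := hFinv δ hδ
  have hνδ : ν.real (Iic (Finv δ)) = δ := by
    rw [measureReal_def, hνF, ENNReal.toReal_ofReal (hδF.symm ▸ hδ.1.le), hδF]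
  simp_rw [hlaw]
  rw [iSup_sub_integral_max_eq hid hδ.1 hνδ,
    setIntegral_Iic_eq_setIntegral_quantile (g := fun x => x) hFmono hFinv hνF hF1
      aestronglyMeasurable_id,
    hδF, integral_of_le hδ.1.le]

theorem cvar_eq_tail_average_of_quantiles {Ω : Type*} [MeasurableSpace Ω]
    (μ : Measure Ω) [IsProbabilityMeasure μ]
    (X : Ω → ℝ) (hX : Integrable X μ)
    (F : ℝ → ℝ) (hF : ∀ t : ℝ, F t = (μ {ω | X ω ≤ t}).toReal)
    (hFcont : Continuous F) (hFmono : StrictMono F)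
    (Finv : ℝ → ℝ) (hFinv : ∀ p ∈ Set.Ioo (0:ℝ) 1, F (Finv p) = p)
    (δ : ℝ) (hδ : δ ∈ Set.Ioo (0:ℝ) 1) :
    (⨆ τ : ℝ, (τ - (1 / δ) * ∫ ω, max (τ - X ω) 0 ∂μ)) =
      (1 / δ) * ∫ η in (0:ℝ)..δ, Finv η :=
  cvar_eq_tail_average_of_quantiles_general μ X hX F hF hFmono Finv hFinv δ hδ
end

section
/- Let k ≥ 1, a sequence of nondecreasing functions φ₁ ≤ φ₂ ≤ ... ≤ φ_k on [0,1] with φ_i(1) ≤ φ_{i+1}(0) for all i, and define for a seed r ∈ [0,1] a greedy allocation process over a fixed sequence of valuations v₁, ..., v_T ∈ [L, U]: maintain a counter y starting at 0; at step t, if y < k and v_t ≥ φ_{y+1}(r), increment y. Let y^{(r)} denote the final counter value. Then r ↦ y^{(r)} is nonincreasing: r₁ ≤ r₂ implies y^{(r₁)} ≥ y^{(r₂)}. -/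
open Classical in
/-- Final counter of the greedy allocation process: starting from `y = 0`,
each valuation `vt` increments the counter if `y < k` and `vt ≥ φ (y+1) r`. -/
noncomputable def finalCount (k : ℕ) (φ : ℕ → ℝ → ℝ) (r : ℝ) (v : List ℝ) : ℕ :=
  v.foldl (fun y vt => if y < k ∧ φ (y + 1) r ≤ vt then y + 1 else y) 0

open Classical in
lemma greedy_aux (k : ℕ) (φ : ℕ → ℝ → ℝ)
    (hmono : ∀ i : ℕ, MonotoneOn (φ i) (Set.Icc 0 1))
    (r₁ r₂ : ℝ) (hr₁ : r₁ ∈ Set.Icc (0:ℝ) 1) (hr₂ : r₂ ∈ Set.Icc (0:ℝ) 1)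
    (hr : r₁ ≤ r₂) :
    ∀ (v : List ℝ) (a b : ℕ), b ≤ a →
      v.foldl (fun y vt => if y < k ∧ φ (y + 1) r₂ ≤ vt then y + 1 else y) b ≤
      v.foldl (fun y vt => if y < k ∧ φ (y + 1) r₁ ≤ vt then y + 1 else y) a := by
  intro v
  induction v with
  | nil => intro a b h; simpa using h
  | cons vt tl ih =>
    intro a b h
    simp only [List.foldl_cons]
    apply ih
    rcases lt_or_eq_of_le h with hlt | heq
    · split_ifs with h1 h2 <;> omega
    · subst heq
      split_ifs with h1 h2
      · omega
      · exact absurd ⟨h1.1, le_trans (hmono _ hr₁ hr₂ hr) h1.2⟩ h2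
      · omega
      · omega

theorem greedy_allocation_monotone_in_seed (k : ℕ) (hk : 1 ≤ k)
    (L U : ℝ) (φ : ℕ → ℝ → ℝ)
    (hmono : ∀ i : ℕ, MonotoneOn (φ i) (Set.Icc 0 1))
    (hdom : ∀ i : ℕ, φ i 1 ≤ φ (i + 1) 0)
    (v : List ℝ) (hv : ∀ vt ∈ v, vt ∈ Set.Icc L U)
    (r₁ r₂ : ℝ) (hr₁ : r₁ ∈ Set.Icc (0:ℝ) 1) (hr₂ : r₂ ∈ Set.Icc (0:ℝ) 1)
    (hr : r₁ ≤ r₂) :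
    finalCount k φ r₂ v ≤ finalCount k φ r₁ v :=
  greedy_aux k φ hmono r₁ r₂ hr₁ hr₂ hr v 0 0 le_rfl
end
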